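/- arXiv:1112.6338 — 6 statements merged into one kernel-verified Lean document; each statement's English description precedes it below -/
import Mathlib

section
/- Let J be a nontrivial interval in ℝ and f : J → X a continuous map into a complex Banach space X which is right-sided continuously differentiable on J minus its right endpoint, such that ∂₊f extends continuously to the right endpoint of J if that endpoint belongs to J. Then f is (two-sided) continuously differentiable on J and f' = ∂₊f. -/
open Set

/-! Fix `t ∈ J` and `ε > 0`, and choose `δ` so that `‖g x - g t‖ ≤ ε` on `J ∩ ball t δ`. The map
`x ↦ f x - x • g t` has right derivative `g x - g t`, so the one-sided mean value inequality
bounds its increment between `t` and any `s ∈ J ∩ ball t δ` by `ε * |s - t|`, on either side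
of `t`. This is exactly the little-o estimate for `f` at `t` within `J` with derivative `g t`. -/

theorem norm_sub_sub_smul_le_of_hasDerivWithinAt_Ici
    {E : Type*} [NormedAddCommGroup E] [NormedSpace ℝ E]
    {f g : ℝ → E} {a b ε : ℝ} {c : E} (hab : a ≤ b)
    (hf : ContinuousOn f (Icc a b))
    (hg : ∀ x ∈ Ico a b, HasDerivWithinAt f (g x) (Ici x) x)
    (hgc : ∀ x ∈ Ico a b, ‖g x - c‖ ≤ ε) :
    ‖f b - f a - (b - a) • c‖ ≤ ε * (b - a) := by
  have hφ : ContinuousOn (fun x => f x - x • c) (Icc a b) :=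
    hf.sub (continuous_id.smul continuous_const).continuousOn
  have hφ' : ∀ x ∈ Ico a b,
      HasDerivWithinAt (fun x => f x - x • c) (g x - c) (Ici x) x := fun x hx => by
    simpa using (hg x hx).fun_sub ((hasDerivWithinAt_id x (Ici x)).smul_const c)
  have := norm_image_sub_le_of_norm_deriv_right_le_segment hφ hφ' hgc b ⟨hab, le_rfl⟩
  rwa [sub_sub_sub_comm, ← sub_smul] at this

theorem Set.OrdConnected.hasDerivWithinAt_of_hasDerivWithinAt_Ici
    {E : Type*} [NormedAddCommGroup E] [NormedSpace ℝ E]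
    {J : Set ℝ} (hJ : J.OrdConnected) {f g : ℝ → E} {t : ℝ} (ht : t ∈ J)
    (hf : ContinuousOn f J)
    (hg : ∀ x ∈ J, (∃ s ∈ J, x < s) → HasDerivWithinAt f (g x) (Ici x) x)
    (hgc : ContinuousWithinAt g J t) :
    HasDerivWithinAt f (g t) J t := by
  rw [hasDerivWithinAt_iff_isLittleO, Asymptotics.isLittleO_iff]
  intro ε hε
  obtain ⟨δ, hδ, hgδ⟩ := Metric.continuousWithinAt_iff.1 hgc ε hε
  set U := J ∩ Metric.ball t δ
  have hU : U.OrdConnected := hJ.inter (convex_ball t δ).ordConnected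
  have increment_le : ∀ a ∈ U, ∀ b ∈ U, a ≤ b → ‖f b - f a - (b - a) • g t‖ ≤ ε * (b - a) := by
    intro a ha b hb hab
    have hsub : Icc a b ⊆ U := hU.out ha hb
    refine norm_sub_sub_smul_le_of_hasDerivWithinAt_Ici (g := g) hab
      (hf.mono (hsub.trans inter_subset_left)) (fun x hx => ?_) (fun x hx => ?_)
    · exact hg x (hsub (Ico_subset_Icc_self hx)).1 ⟨b, hb.1, hx.2⟩
    · obtain ⟨hxJ, hxt⟩ := hsub (Ico_subset_Icc_self hx)
      rw [← dist_eq_norm]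
      exact (hgδ hxJ hxt).le
  have htU : t ∈ U := ⟨ht, Metric.mem_ball_self hδ⟩
  filter_upwards [inter_mem_nhdsWithin J (Metric.ball_mem_nhds t hδ)] with s hs
  rcases le_total t s with hts | hst
  · simpa [Real.norm_eq_abs, abs_of_nonneg (sub_nonneg.2 hts)] using
      increment_le t htU s hs hts
  · have hneg : f s - f t - (s - t) • g t = -(f t - f s - (t - s) • g t) := by
      simp only [sub_smul]; abel
    rw [hneg, norm_neg, Real.norm_eq_abs, abs_of_nonpos (sub_nonpos.2 hst), neg_sub]
    exact increment_le s hs t htU hst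

theorem one_sided_contDiff_implies_contDiff_general
    {X : Type*} [NormedAddCommGroup X] [NormedSpace ℂ X]
    (J : Set ℝ) (hJint : J.OrdConnected)
    (f g : ℝ → X)
    (hf : ContinuousOn f J)
    (hg : ∀ t ∈ J, (∃ s ∈ J, t < s) → HasDerivWithinAt f (g t) (Set.Ici t) t)
    (hgc : ContinuousOn g J) :
    ∀ t ∈ J, HasDerivWithinAt f (g t) J t := fun t ht =>
  hJint.hasDerivWithinAt_of_hasDerivWithinAt_Ici ht hf hg (hgc t ht)

/-- **One-sided continuous differentiability implies continuous differentiability.**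
Let `J` be a nontrivial interval in `ℝ` and `f : J → X` continuous into a complex Banach
space `X`, right-sided continuously differentiable on `J` minus its right endpoint (with
right derivative `g`, continuous on `J`, the continuity of `g` at the right endpoint of
`J` encoding the continuous extension of `∂₊f` there).  Then `f` is (two-sided)
continuously differentiable on `J` with derivative `f' = ∂₊f = g`. -/
theorem one_sided_contDiff_implies_contDiff
    {X : Type*} [NormedAddCommGroup X] [NormedSpace ℂ X] [CompleteSpace X]
    (J : Set ℝ) (hJint : J.OrdConnected) (hJnt : ∃ a ∈ J, ∃ b ∈ J, a < b)
    (f g : ℝ → X)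
    (hf : ContinuousOn f J)
    (hg : ∀ t ∈ J, (∃ s ∈ J, t < s) → HasDerivWithinAt f (g t) (Set.Ici t) t)
    (hgc : ContinuousOn g J) :
    ∀ t ∈ J, HasDerivWithinAt f (g t) J t :=
  one_sided_contDiff_implies_contDiff_general J hJint f g hf hg hgc
end

section
/- Let J be a nontrivial interval in ℝ and m ∈ ℕ ∪ {0}. If A(t) is a bounded linear operator on a complex Banach space X for each t ∈ J, and t ↦ A(t) is (m+1)-times continuously differentiable with respect to the strong operator topology, then t ↦ A(t) is m-times continuously differentiable with respect to the operator-norm topology. -/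
open Set Filter Topology

/-! Pointwise convergence of the difference quotients `(s - t)⁻¹ • (A s - A t)` makes them
eventually bounded in norm by Banach–Steinhaus; hence `A` is norm-continuous and the strong
derivative `B t` is a bounded operator. By induction on `m`, applied to the strongly `C^m`
family `B`, the family `B` is norm-continuous, and then the mean value theorem for
`s ↦ A s x - (s - t) • B t x`, uniformly in `‖x‖ ≤ 1`, shows that `B` is the norm derivative
of `A`. -/

section BanachSteinhaus

variable {α 𝕜 E F : Type*} [NontriviallyNormedField 𝕜]
  [NormedAddCommGroup E] [NormedSpace 𝕜 E] [CompleteSpace E]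
  [NormedAddCommGroup F] [NormedSpace 𝕜 F]

theorem ContinuousLinearMap.exists_eventually_opNorm_le_of_tendsto_apply {l : Filter α}
    [l.IsCountablyGenerated] {g : α → E →L[𝕜] F} {f : E → F}
    (h : ∀ x, Tendsto (fun a => g a x) l (𝓝 (f x))) : ∃ C, ∀ᶠ a in l, ‖g a‖ ≤ C := by
  by_contra! hg
  obtain ⟨s, hs⟩ := l.exists_antitone_basis
  have hgrow (n : ℕ) : ∃ a ∈ s n, (n : ℝ) < ‖g a‖ :=
    ((hg n).and_eventually (hs.mem n)).exists.imp fun _ h => ⟨h.2, h.1⟩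
  choose u hus hgu using hgrow
  have hul : Tendsto u atTop l := hs.tendsto hus
  obtain ⟨C, hC⟩ := banach_steinhaus fun x =>
    (((h x).comp hul).norm.bddAbove_range).imp fun _ hC n => hC (mem_range_self n)
  obtain ⟨n, hn⟩ := exists_nat_gt C
  exact (hC n).not_gt (hn.trans (hgu n))

end BanachSteinhaus

section StrongDerivative

variable {𝕜 E F : Type*} [NontriviallyNormedField 𝕜]
  [NormedAddCommGroup E] [NormedSpace 𝕜 E]
  [NormedAddCommGroup F] [NormedSpace 𝕜 F] [NormedSpace ℝ F] [SMulCommClass 𝕜 ℝ F]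
  {A B : ℝ → E →L[𝕜] F} {J : Set ℝ} {t : ℝ}

theorem tendsto_slope_apply (hA : ∀ x, DifferentiableWithinAt ℝ (fun s => A s x) J t) (x : E) :
    Tendsto (fun s => ((s - t)⁻¹ • (A s - A t)) x) (𝓝[J \ {t}] t)
      (𝓝 (derivWithin (fun s => A s x) J t)) := by
  refine (hasDerivWithinAt_iff_tendsto_slope.mp (hA x).hasDerivWithinAt).congr fun s => ?_
  simp [slope_def_module]

theorem exists_hasDerivWithinAt_apply [CompleteSpace E] (hJt : AccPt t (𝓟 J))
    (hA : ∀ x, DifferentiableWithinAt ℝ (fun s => A s x) J t) :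
    ∃ B : E →L[𝕜] F, ∀ x, HasDerivWithinAt (fun s => A s x) (B x) J t := by
  have := accPt_principal_iff_nhdsWithin.mp hJt
  exact ⟨continuousLinearMapOfTendsto _ (tendsto_pi_nhds.mpr (tendsto_slope_apply hA)),
    fun x => (hA x).hasDerivWithinAt⟩

theorem continuousWithinAt_of_differentiableWithinAt_apply [CompleteSpace E]
    (hA : ∀ x, DifferentiableWithinAt ℝ (fun s => A s x) J t) : ContinuousWithinAt A J t := by
  obtain ⟨C, hC⟩ := ContinuousLinearMap.exists_eventually_opNorm_le_of_tendsto_apply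
    (tendsto_slope_apply hA)
  have hbound : ∀ᶠ s in 𝓝[J \ {t}] t, ‖A s - A t‖ ≤ C * ‖s - t‖ := by
    filter_upwards [hC, self_mem_nhdsWithin] with s hs hsJ
    have hst : s - t ≠ 0 := sub_ne_zero.mpr hsJ.2
    calc ‖A s - A t‖ = ‖s - t‖ * ‖(s - t)⁻¹ • (A s - A t)‖ := by
          rw [norm_smul, ← mul_assoc, norm_inv, mul_inv_cancel₀ (norm_ne_zero_iff.mpr hst),
            one_mul]
      _ ≤ C * ‖s - t‖ := by rw [mul_comm]; gcongr
  have hlim : Tendsto (fun s => C * ‖s - t‖) (𝓝[J \ {t}] t) (𝓝 0) := by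
    refine tendsto_nhdsWithin_of_tendsto_nhds ?_
    simpa using ((continuous_id.sub (continuous_const (y := t))).norm.const_mul C).tendsto t
  refine continuousWithinAt_sdiff_self.mp (tendsto_iff_norm_sub_tendsto_zero.mpr ?_)
  exact squeeze_zero' (Eventually.of_forall fun _ => norm_nonneg _) hbound hlim

theorem hasDerivWithinAt_of_hasDerivWithinAt_apply (hJ : Convex ℝ J)
    (hA : ∀ s ∈ J, ∀ x, HasDerivWithinAt (fun r => A r x) (B s x) J s)
    (hB : ContinuousWithinAt B J t) (ht : t ∈ J) : HasDerivWithinAt A (B t) J t := by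
  rw [hasDerivWithinAt_iff_isLittleO, Asymptotics.isLittleO_iff]
  intro c hc
  obtain ⟨δ, hδ, hδB⟩ := Metric.mem_nhdsWithin_iff.mp (hB (Metric.ball_mem_nhds (B t) hc))
  set K := J ∩ Metric.ball t δ
  have hK : Convex ℝ K := hJ.inter (convex_ball t δ)
  have htK : t ∈ K := ⟨ht, Metric.mem_ball_self hδ⟩
  filter_upwards [inter_mem_nhdsWithin J (Metric.ball_mem_nhds t hδ)] with u hu
  refine ContinuousLinearMap.opNorm_le_bound _ (by positivity) fun x => ?_
  have hderiv : ∀ r ∈ K, HasDerivWithinAt (fun v => A v x - (v - t) • B t x)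
      (B r x - B t x) K r := fun r hr =>
    ((hA r hr.1 x).mono inter_subset_left).sub
      (by simpa using ((hasDerivWithinAt_id r K).sub_const t).smul_const (B t x))
  have hbound : ∀ r ∈ K, ‖B r x - B t x‖ ≤ c * ‖x‖ := fun r hr => by
    rw [← sub_apply]
    exact (B r - B t).le_of_opNorm_le (dist_eq_norm (B r) (B t) ▸ (hδB ⟨hr.2, hr.1⟩).le) x
  have hmvt := hK.norm_image_sub_le_of_norm_hasDerivWithin_le hderiv hbound htK hu
  calc ‖(A u - A t - (u - t) • B t) x‖
      = ‖(A u x - (u - t) • B t x) - (A t x - (t - t) • B t x)‖ := by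
        simp only [sub_apply, smul_apply, sub_self, zero_smul, sub_zero, sub_right_comm]
    _ ≤ c * ‖x‖ * ‖u - t‖ := hmvt
    _ = c * ‖u - t‖ * ‖x‖ := by ring

theorem contDiffOn_of_contDiffOn_succ_apply [CompleteSpace E] (hJ : Convex ℝ J)
    (hJu : UniqueDiffOn ℝ J) (m : ℕ) (hA : ∀ x, ContDiffOn ℝ (m + 1 : ℕ) (fun t => A t x) J) :
    ContDiffOn ℝ m A J := by
  induction m generalizing A with
  | zero =>
    rw [Nat.cast_zero, contDiffOn_zero]
    exact fun t ht => continuousWithinAt_of_differentiableWithinAt_apply fun x =>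
      (hA x).differentiableOn (by simp) t ht
  | succ m ih =>
    have hdiff (x : E) : DifferentiableOn ℝ (fun t => A t x) J :=
      (hA x).differentiableOn (by simp)
    choose! B hB using fun t (ht : t ∈ J) =>
      exists_hasDerivWithinAt_apply (hJu t ht).accPt fun x => hdiff x t ht
    have hBA (x : E) : EqOn (fun t => B t x) (derivWithin (fun t => A t x) J) J :=
      fun t ht => ((hB t ht x).derivWithin (hJu t ht)).symm
    have hBm : ContDiffOn ℝ m B J := ih fun x =>
      ((hA x).derivWithin hJu (by push_cast; rfl)).congr (hBA x)
    have hAB (t : ℝ) (ht : t ∈ J) : HasDerivWithinAt A (B t) J t :=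
      hasDerivWithinAt_of_hasDerivWithinAt_apply hJ hB (hBm.continuousOn t ht) ht
    rw [Nat.cast_succ, contDiffOn_succ_iff_derivWithin hJu]
    refine ⟨fun t ht => (hAB t ht).differentiableWithinAt, by simp, ?_⟩
    exact hBm.congr fun t ht => (hAB t ht).derivWithin (hJu t ht)

end StrongDerivative

theorem Set.OrdConnected.uniqueDiffOn {J : Set ℝ} (hJ : J.OrdConnected)
    (hJnt : ∃ a ∈ J, ∃ b ∈ J, a < b) : UniqueDiffOn ℝ J := by
  obtain ⟨a, ha, b, hb, hab⟩ := hJnt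
  refine uniqueDiffOn_convex hJ.convex ((nonempty_Ioo.mpr hab).mono ?_)
  exact isOpen_Ioo.subset_interior_iff.mpr (Ioo_subset_Icc_self.trans (hJ.out ha hb))

/-- **Strong `C^{m+1}` regularity implies norm `C^m` regularity.**
Let `J` be a nontrivial interval in `ℝ` and `m ∈ ℕ ∪ {0}`.  If `A t` is a bounded linear
operator on a complex Banach space `X` for each `t ∈ J`, and `t ↦ A t` is `(m+1)`-times
continuously differentiable with respect to the strong operator topology (i.e. `t ↦ A t x`
is `C^{m+1}` for every `x ∈ X`), then `t ↦ A t` is `m`-times continuously differentiable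
with respect to the operator-norm topology. -/
theorem strong_cm_succ_implies_norm_cm
    {X : Type*} [NormedAddCommGroup X] [NormedSpace ℂ X] [CompleteSpace X]
    (J : Set ℝ) (hJint : J.OrdConnected) (hJnt : ∃ a ∈ J, ∃ b ∈ J, a < b)
    (m : ℕ) (A : ℝ → X →L[ℂ] X)
    (hA : ∀ x : X, ContDiffOn ℝ (m + 1 : ℕ) (fun t => A t x) J) :
    ContDiffOn ℝ (m : ℕ) A J :=
  contDiffOn_of_contDiffOn_succ_apply hJint.convex (hJint.uniqueDiffOn hJnt) m hA
end

section
/- Let (X₀, 𝒜, μ) be a measure space, X = Lᵖ(X₀, ℂ) for some p ∈ [1,∞), and for each t ∈ [0,1] let E_t ∈ 𝒜 and P(t)g := χ_{E_t} · g for g ∈ X. If t ↦ P(t)g is differentiable for every g ∈ X, then t ↦ P(t) is constant. -/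
open Set Filter Topology MeasureTheory ENNReal

/-!
Write `Q t := P t - P s`, multiplication by `χ_{E t} - χ_{E s}`, a function with values in
`{0, ±1}`. Hence `Q t` is a contraction and preserves the norm of every vector in its range.
The difference quotient `v t` of `t ↦ P t g` at `s` lies in the range of `Q t`, so
`‖v t‖ = ‖Q t (v t)‖ ≤ ‖Q t D‖ + ‖v t - D‖`, where `D` is the derivative at `s`. Both terms
tend to `0` as `t → s⁺` (the first by continuity of `t ↦ P t D`), so `D = 0`: the derivative
vanishes on `[0, 1)`, and the family is constant.
-/

theorem eq_zero_of_tendsto_of_norm_le_norm_apply {ι F : Type*} [NormedAddCommGroup F]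
    {l : Filter ι} [l.NeBot] {v : ι → F} {D : F} (hv : Tendsto v l (𝓝 D))
    (Q : ι → F → F) (hQ : ∀ᶠ i in l, LipschitzWith 1 (Q i))
    (hle : ∀ᶠ i in l, ‖v i‖ ≤ ‖Q i (v i)‖) (hQD : Tendsto (fun i => Q i D) l (𝓝 0)) :
    D = 0 := by
  have hbound : ∀ᶠ i in l, ‖v i‖ ≤ ‖Q i D‖ + ‖v i - D‖ := by
    filter_upwards [hQ, hle] with i hQi hlei
    calc ‖v i‖ ≤ ‖Q i (v i)‖ := hlei
      _ ≤ ‖Q i D‖ + ‖Q i (v i) - Q i D‖ := norm_le_insert' _ _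
      _ ≤ ‖Q i D‖ + ‖v i - D‖ := by
        gcongr
        simpa using hQi.norm_sub_le (v i) D
  have hlim : Tendsto (fun i => ‖Q i D‖ + ‖v i - D‖) l (𝓝 0) := by
    simpa using hQD.norm.add (tendsto_sub_nhds_zero_iff.2 hv).norm
  exact norm_le_zero_iff.1 (le_of_tendsto_of_tendsto hv.norm hlim hbound)

namespace MeasureTheory.Lp

variable {X₀ : Type*} [MeasurableSpace X₀] {μ : Measure X₀} {p : ℝ≥0∞}
  {T : Lp ℂ p μ → Lp ℂ p μ} {m : X₀ → ℂ}

theorem sub_ae_eq_mul_of_ae_eq_mul {A B : Lp ℂ p μ → Lp ℂ p μ} {a b : X₀ → ℂ}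
    (hA : ∀ g, (A g : X₀ → ℂ) =ᵐ[μ] fun x => a x * g x)
    (hB : ∀ g, (B g : X₀ → ℂ) =ᵐ[μ] fun x => b x * g x) (g : Lp ℂ p μ) :
    (↑(A g - B g) : X₀ → ℂ) =ᵐ[μ] fun x => (a x - b x) * g x := by
  filter_upwards [coeFn_sub (A g) (B g), hA g, hB g] with x hsub ha hb
  rw [hsub, Pi.sub_apply, ha, hb, sub_mul]

theorem map_sub_of_ae_eq_mul (hT : ∀ g, (T g : X₀ → ℂ) =ᵐ[μ] fun x => m x * g x)
    (v w : Lp ℂ p μ) : T (v - w) = T v - T w := by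
  refine Lp.ext ?_
  filter_upwards [hT (v - w), hT v, hT w, coeFn_sub v w, coeFn_sub (T v) (T w)]
    with x h h₁ h₂ hvw hTvw
  rw [h, hTvw, Pi.sub_apply, h₁, h₂, hvw, Pi.sub_apply, mul_sub]

theorem map_smul_of_ae_eq_mul (hT : ∀ g, (T g : X₀ → ℂ) =ᵐ[μ] fun x => m x * g x)
    (c : ℝ) (v : Lp ℂ p μ) : T (c • v) = c • T v := by
  refine Lp.ext ?_
  filter_upwards [hT (c • v), hT v, coeFn_smul c v, coeFn_smul c (T v)] with x h h₁ hv hTv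
  rw [h, hTv, hv, Pi.smul_apply, Pi.smul_apply, h₁, Complex.real_smul, Complex.real_smul,
    mul_left_comm]

theorem norm_le_of_ae_eq_mul (hT : ∀ g, (T g : X₀ → ℂ) =ᵐ[μ] fun x => m x * g x)
    (hm : ∀ᵐ x ∂μ, ‖m x‖ ≤ 1) (g : Lp ℂ p μ) : ‖T g‖ ≤ ‖g‖ := by
  refine toReal_mono (eLpNorm_ne_top g) (eLpNorm_mono_ae ?_)
  filter_upwards [hT g, hm] with x h hmx
  rw [h, norm_mul]
  exact mul_le_of_le_one_left (norm_nonneg _) hmx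

theorem lipschitzWith_one_of_ae_eq_mul [Fact (1 ≤ p)] (hT : ∀ g, (T g : X₀ → ℂ) =ᵐ[μ] fun x => m x * g x)
    (hm : ∀ᵐ x ∂μ, ‖m x‖ ≤ 1) : LipschitzWith 1 T :=
  LipschitzWith.mk_one fun v w => by
    rw [_root_.dist_eq_norm_sub, _root_.dist_eq_norm_sub, ← map_sub_of_ae_eq_mul hT]
    exact norm_le_of_ae_eq_mul hT hm (v - w)

theorem norm_map_map_of_ae_eq_mul (hT : ∀ g, (T g : X₀ → ℂ) =ᵐ[μ] fun x => m x * g x)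
    (hm : ∀ᵐ x ∂μ, ‖m x‖ = 0 ∨ ‖m x‖ = 1) (g : Lp ℂ p μ) :
    ‖T (T g)‖ = ‖T g‖ := by
  refine congrArg ENNReal.toReal (eLpNorm_congr_norm_ae ?_)
  filter_upwards [hT (T g), hT g, hm] with x h h₁ hmx
  rw [h, h₁, norm_mul, norm_mul, ← mul_assoc]
  rcases hmx with hmx | hmx <;> simp [hmx]

end MeasureTheory.Lp

theorem norm_indicator_one_sub_indicator_one {α : Type*} (E F : Set α) (x : α) :
    ‖E.indicator (fun _ => (1 : ℂ)) x - F.indicator (fun _ => (1 : ℂ)) x‖ = 0 ∨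
      ‖E.indicator (fun _ => (1 : ℂ)) x - F.indicator (fun _ => (1 : ℂ)) x‖ = 1 := by
  by_cases hE : x ∈ E <;> by_cases hF : x ∈ F <;> simp [hE, hF]

theorem derivWithin_indicator_projections_eq_zero {X₀ : Type*} [MeasurableSpace X₀]
    {μ : Measure X₀} {p : ℝ≥0∞} [Fact (1 ≤ p)] {E : ℝ → Set X₀} {P : ℝ → Lp ℂ p μ → Lp ℂ p μ}
    (hP : ∀ t ∈ Icc (0:ℝ) 1, ∀ g : Lp ℂ p μ,
      (P t g : X₀ → ℂ) =ᵐ[μ] fun x => (E t).indicator (fun _ => (1:ℂ)) x * g x)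
    (hdiff : ∀ g : Lp ℂ p μ, DifferentiableOn ℝ (fun t => P t g) (Icc 0 1))
    {s : ℝ} (hs : s ∈ Ico (0:ℝ) 1) (g : Lp ℂ p μ) :
    derivWithin (fun t => P t g) (Icc 0 1) s = 0 := by
  set D := derivWithin (fun t => P t g) (Icc 0 1) s
  have hsI : s ∈ Icc (0:ℝ) 1 := Ico_subset_Icc_self hs
  have hIcc : Icc (0:ℝ) 1 ∈ 𝓝[>] s := Icc_mem_nhdsGT_of_mem hs
  let Q : ℝ → Lp ℂ p μ → Lp ℂ p μ := fun t v => P t v - P s v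
  have hQ : ∀ᶠ t in 𝓝[>] s, ∀ v, (Q t v : X₀ → ℂ) =ᵐ[μ] fun x =>
      ((E t).indicator (fun _ => (1:ℂ)) x - (E s).indicator (fun _ => (1:ℂ)) x) * v x := by
    filter_upwards [hIcc] with t ht
    exact Lp.sub_ae_eq_mul_of_ae_eq_mul (hP t ht) (hP s hsI)
  have hm t := ae_of_all μ (norm_indicator_one_sub_indicator_one (E t) (E s))
  have hslope : Tendsto (slope (fun t => P t g) s) (𝓝[>] s) (𝓝 D) :=
    (hasDerivWithinAt_iff_tendsto_slope' (lt_irrefl s)).1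
      ((hdiff g s hsI).hasDerivWithinAt.mono_of_mem_nhdsWithin hIcc)
  have hQD : Tendsto (fun t => Q t D) (𝓝[>] s) (𝓝 0) := by
    have hcont := ((hdiff D).continuousOn s hsI).tendsto.mono_left (nhdsWithin_le_of_mem hIcc)
    simpa using hcont.sub_const (P s D)
  refine eq_zero_of_tendsto_of_norm_le_norm_apply hslope Q ?_ ?_ hQD
  · filter_upwards [hQ] with t hQt
    exact Lp.lipschitzWith_one_of_ae_eq_mul hQt
      ((hm t).mono fun x hx => hx.elim (fun h => h.trans_le zero_le_one) le_of_eq)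
  · filter_upwards [hQ] with t hQt
    have hrange : slope (fun t => P t g) s t = Q t ((t - s)⁻¹ • g) := by
      rw [slope_def_module, Lp.map_smul_of_ae_eq_mul hQt]
    rw [hrange, Lp.norm_map_map_of_ae_eq_mul hQt (hm t)]

theorem differentiable_indicator_projections_constant_general
    {X₀ : Type*} [MeasurableSpace X₀] (μ : Measure X₀)
    (p : ℝ≥0∞) [Fact (1 ≤ p)]
    (E : ℝ → Set X₀)
    (P : ℝ → Lp ℂ p μ → Lp ℂ p μ)
    (hP : ∀ t ∈ Set.Icc (0:ℝ) 1, ∀ g : Lp ℂ p μ,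
      (P t g : X₀ → ℂ) =ᵐ[μ] fun x => (E t).indicator (fun _ => (1:ℂ)) x * g x)
    (hdiff : ∀ g : Lp ℂ p μ, DifferentiableOn ℝ (fun t => P t g) (Set.Icc 0 1)) :
    ∀ t ∈ Set.Icc (0:ℝ) 1, ∀ s ∈ Set.Icc (0:ℝ) 1, ∀ g : Lp ℂ p μ, P t g = P s g := by
  intro t ht s hs g
  have hconst := constant_of_derivWithin_zero (hdiff g)
    fun r hr => derivWithin_indicator_projections_eq_zero hP hdiff hr g
  rw [hconst t ht, hconst s hs]

/-- **Differentiable families of multiplication-by-indicator projections are constant.**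
Let `(X₀, 𝒜, μ)` be a measure space, `X = Lᵖ(X₀, ℂ)` for some `p ∈ [1,∞)`, and for each
`t ∈ [0,1]` let `E t ∈ 𝒜` and `P t g := χ_{E t} · g` for `g ∈ X`.  If `t ↦ P t g` is
differentiable (on `[0,1]`) for every `g ∈ X`, then `t ↦ P t` is constant. -/
theorem differentiable_indicator_projections_constant
    {X₀ : Type*} [MeasurableSpace X₀] (μ : Measure X₀)
    (p : ℝ≥0∞) [Fact (1 ≤ p)] (hp : p ≠ ⊤)
    (E : ℝ → Set X₀) (hE : ∀ t ∈ Set.Icc (0:ℝ) 1, MeasurableSet (E t))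
    (P : ℝ → Lp ℂ p μ → Lp ℂ p μ)
    (hP : ∀ t ∈ Set.Icc (0:ℝ) 1, ∀ g : Lp ℂ p μ,
      (P t g : X₀ → ℂ) =ᵐ[μ] fun x => (E t).indicator (fun _ => (1:ℂ)) x * g x)
    (hdiff : ∀ g : Lp ℂ p μ, DifferentiableOn ℝ (fun t => P t g) (Set.Icc 0 1)) :
    ∀ t ∈ Set.Icc (0:ℝ) 1, ∀ s ∈ Set.Icc (0:ℝ) 1, ∀ g : Lp ℂ p μ, P t g = P s g :=
  differentiable_indicator_projections_constant_general μ p E P hP hdiff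
end

section
/- For d ∈ ℕ ∪ {∞} let A_d(λ) be the operator on ℓ²(I_d) given by the upper bidiagonal matrix with λ on the diagonal and 1 on the superdiagonal, and let λ_d := sup{λ ∈ ℝ : Re⟨x, A_d(λ)x⟩ ≤ 0 for all x ∈ ℓ²(I_d)}. Then λ_d ∈ [−1, 0] for all d, λ₁ = 0, λ_∞ = −1, λ_d → −1 as d → ∞, and the sequence (λ_d) is monotonically decreasing: λ_{d+1} ≤ λ_d for all d ∈ ℕ. -/
open Set Filter Topology

/-!
The elementary bound `Re (conj z * (-z + w)) ≤ (‖w‖² - ‖z‖²) / 2` makes the form at `λ = -1`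
telescope, to `≤ -‖x₁‖² / 2` on `ℂ^d` and, on `ℓ²`, to a limit of `‖xₙ‖² / 2 → 0`; so `-1 ≤ λ_d`.
The constant vector gives `d λ + d - 1 ≤ 0`, i.e. `λ_d ≤ -1 + 1/d`. Extension by zero embeds
`ℂ^d` into `ℂ^(d+1)` and into `ℓ²` preserving the form, which gives `λ_(d+1) ≤ λ_d` and
`λ_∞ ≤ -1 + 1/d` for every `d`, hence `λ_∞ = -1`. For `d = 1` the form is `λ ‖x₁‖²`, so `λ₁ = 0`.
-/

/-- `Re ⟪x, A_d(l) x⟫` for the upper bidiagonal operator `A_d(l)` (diagonal `l`,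
superdiagonal `1`) on `ℓ²(I_d) = ℂ^d`, `d` finite. -/
noncomputable def reInnerAFin (d : ℕ) (l : ℝ) (x : Fin d → ℂ) : ℝ :=
  (∑ k : Fin d, (starRingEnd ℂ) (x k) *
    ((l : ℂ) * x k + if h : (k : ℕ) + 1 < d then x ⟨(k : ℕ) + 1, h⟩ else 0)).re

/-- `λ_d := sup {l ∈ ℝ : Re ⟪x, A_d(l) x⟫ ≤ 0 for all x ∈ ℓ²(I_d)}`, `d` finite. -/
noncomputable def lamFin (d : ℕ) : ℝ :=
  sSup {l : ℝ | ∀ x : Fin d → ℂ, reInnerAFin d l x ≤ 0}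

/-- `Re ⟪x, A_∞(l) x⟫` for the upper bidiagonal operator `A_∞(l)` on `ℓ²(ℕ)`. -/
noncomputable def reInnerAInf (l : ℝ) (x : lp (fun _ : ℕ => ℂ) 2) : ℝ :=
  (∑' k : ℕ, (starRingEnd ℂ) ((x : ∀ _ : ℕ, ℂ) k) *
    ((l : ℂ) * (x : ∀ _ : ℕ, ℂ) k + (x : ∀ _ : ℕ, ℂ) (k + 1))).re

/-- `λ_∞ := sup {l ∈ ℝ : Re ⟪x, A_∞(l) x⟫ ≤ 0 for all x ∈ ℓ²(ℕ)}`. -/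
noncomputable def lamInf : ℝ :=
  sSup {l : ℝ | ∀ x : lp (fun _ : ℕ => ℂ) 2, reInnerAInf l x ≤ 0}

/-- The `k`-th summand of `⟪f, A(l) f⟫`. -/
noncomputable def bidiagTerm (l : ℝ) (f : ℕ → ℂ) (k : ℕ) : ℂ :=
  starRingEnd ℂ (f k) * ((l : ℂ) * f k + f (k + 1))

lemma bidiagTerm_of_eq_zero {l : ℝ} {f : ℕ → ℂ} {k : ℕ} (hk : f k = 0) :
    bidiagTerm l f k = 0 := by
  simp [bidiagTerm, hk]

lemma re_bidiagTerm_le (l : ℝ) (f : ℕ → ℂ) (k : ℕ) :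
    (bidiagTerm l f k).re ≤ (l + 1 / 2) * ‖f k‖ ^ 2 + ‖f (k + 1)‖ ^ 2 / 2 := by
  have hsplit : bidiagTerm l f k = (l * ‖f k‖ ^ 2 : ℝ) + starRingEnd ℂ (f k) * f (k + 1) := by
    rw [bidiagTerm, mul_add, ← mul_assoc, mul_comm _ (l : ℂ), mul_assoc, Complex.conj_mul']
    push_cast; ring
  have hcross : (starRingEnd ℂ (f k) * f (k + 1)).re ≤ ‖f k‖ * ‖f (k + 1)‖ := by
    simpa using Complex.re_le_norm (starRingEnd ℂ (f k) * f (k + 1))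
  rw [hsplit, Complex.add_re, Complex.ofReal_re]
  nlinarith [two_mul_le_add_sq ‖f k‖ ‖f (k + 1)‖]

lemma norm_bidiagTerm_le (l : ℝ) (f : ℕ → ℂ) (k : ℕ) :
    ‖bidiagTerm l f k‖ ≤ (|l| + 1 / 2) * ‖f k‖ ^ 2 + ‖f (k + 1)‖ ^ 2 / 2 := by
  have hsum : ‖(l : ℂ) * f k + f (k + 1)‖ ≤ |l| * ‖f k‖ + ‖f (k + 1)‖ := by
    simpa using norm_add_le ((l : ℂ) * f k) (f (k + 1))
  rw [bidiagTerm, norm_mul, Complex.norm_conj]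
  nlinarith [two_mul_le_add_sq ‖f k‖ ‖f (k + 1)‖, norm_nonneg (f k)]

lemma summable_bidiagTerm (l : ℝ) {f : ℕ → ℂ} (hf : Summable fun k => ‖f k‖ ^ 2) :
    Summable (bidiagTerm l f) :=
  .of_norm_bounded ((hf.mul_left _).add (((summable_nat_add_iff 1).2 hf).div_const 2))
    (norm_bidiagTerm_le l f)

/-- At `l = -1` the form telescopes: each summand is at most `(‖f (k+1)‖² - ‖f k‖²) / 2`. -/
lemma re_sum_bidiagTerm_neg_one_le (f : ℕ → ℂ) (n : ℕ) :
    (∑ k ∈ Finset.range n, bidiagTerm (-1) f k).re ≤ (‖f n‖ ^ 2 - ‖f 0‖ ^ 2) / 2 := by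
  rw [Complex.re_sum]
  calc ∑ k ∈ Finset.range n, (bidiagTerm (-1) f k).re
      ≤ ∑ k ∈ Finset.range n, (‖f (k + 1)‖ ^ 2 / 2 - ‖f k‖ ^ 2 / 2) :=
        Finset.sum_le_sum fun k _ => by linarith [re_bidiagTerm_le (-1) f k]
    _ = (‖f n‖ ^ 2 - ‖f 0‖ ^ 2) / 2 := by
        rw [Finset.sum_range_sub (fun k => ‖f k‖ ^ 2 / 2)]; ring

noncomputable def zeroExtend {d : ℕ} (x : Fin d → ℂ) (n : ℕ) : ℂ :=
  if h : n < d then x ⟨n, h⟩ else 0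

lemma zeroExtend_of_le {d : ℕ} (x : Fin d → ℂ) {n : ℕ} (hn : d ≤ n) : zeroExtend x n = 0 :=
  dif_neg (by omega)

lemma reInnerAFin_eq_re_sum {d n : ℕ} (hdn : d ≤ n) (l : ℝ) (x : Fin d → ℂ) :
    reInnerAFin d l x = (∑ k ∈ Finset.range n, bidiagTerm l (zeroExtend x) k).re := by
  rw [← Finset.sum_range_add_sum_Ico _ hdn, Finset.sum_eq_zero (s := Finset.Ico d n)
    fun k hk => bidiagTerm_of_eq_zero (zeroExtend_of_le x (Finset.mem_Ico.1 hk).1), add_zero,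
    ← Fin.sum_univ_eq_sum_range, reInnerAFin]
  simp [bidiagTerm, zeroExtend]

def dissipFin (d : ℕ) : Set ℝ := {l | ∀ x : Fin d → ℂ, reInnerAFin d l x ≤ 0}

lemma neg_one_mem_dissipFin (d : ℕ) : (-1 : ℝ) ∈ dissipFin d := fun x => by
  rw [reInnerAFin_eq_re_sum le_rfl]
  have hd : ‖zeroExtend x d‖ ^ 2 = 0 := by simp [zeroExtend_of_le x le_rfl]
  linarith [re_sum_bidiagTerm_neg_one_le (zeroExtend x) d, sq_nonneg ‖zeroExtend x 0‖]

lemma reInnerAFin_one_const (n : ℕ) (l : ℝ) :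
    reInnerAFin (n + 1) l (fun _ => 1) = (n + 1) * l + n := by
  rw [reInnerAFin_eq_re_sum le_rfl, Finset.sum_range_succ, Finset.sum_congr rfl
    fun k hk => show bidiagTerm l (zeroExtend fun _ => 1) k = l + 1 by
      simp [bidiagTerm, zeroExtend, (Finset.mem_range.1 hk).trans (Nat.lt_succ_self n),
        Finset.mem_range.1 hk]]
  simp [bidiagTerm, zeroExtend]
  ring

lemma le_of_mem_dissipFin {d : ℕ} (hd : 0 < d) {l : ℝ} (hl : l ∈ dissipFin d) :
    l ≤ -1 + 1 / d := by
  obtain ⟨n, rfl⟩ : ∃ n, d = n + 1 := ⟨d - 1, by omega⟩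
  have h := hl fun _ => 1
  rw [reInnerAFin_one_const] at h
  have hl1 : l + 1 ≤ 1 / (n + 1 : ℝ) := by rw [le_div_iff₀ (by positivity)]; linarith
  push_cast
  linarith

lemma dissipFin_succ_subset (d : ℕ) : dissipFin (d + 1) ⊆ dissipFin d := fun l hl x => by
  have hext : zeroExtend (fun k : Fin (d + 1) => zeroExtend x k) = zeroExtend x := by
    funext n
    by_cases hn : n < d + 1
    · simp [zeroExtend, hn]
    · simp [zeroExtend, hn, show ¬n < d by omega]
  have h := hl fun k => zeroExtend x k
  rwa [reInnerAFin_eq_re_sum le_rfl, hext, ← reInnerAFin_eq_re_sum (Nat.le_succ d)] at h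

lemma zero_mem_dissipFin_one : (0 : ℝ) ∈ dissipFin 1 := fun x => by
  simp [reInnerAFin]

lemma bddAbove_dissipFin {d : ℕ} (hd : 0 < d) : BddAbove (dissipFin d) :=
  ⟨-1 + 1 / d, fun _ => le_of_mem_dissipFin hd⟩

lemma neg_one_le_lamFin {d : ℕ} (hd : 0 < d) : -1 ≤ lamFin d :=
  le_csSup (bddAbove_dissipFin hd) (neg_one_mem_dissipFin d)

lemma lamFin_le {d : ℕ} (hd : 0 < d) : lamFin d ≤ -1 + 1 / d :=
  csSup_le ⟨-1, neg_one_mem_dissipFin d⟩ fun _ => le_of_mem_dissipFin hd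

lemma lamFin_one : lamFin 1 = 0 :=
  le_antisymm (by simpa using lamFin_le one_pos)
    (le_csSup (bddAbove_dissipFin one_pos) zero_mem_dissipFin_one)

lemma lamFin_succ_le {d : ℕ} (hd : 0 < d) : lamFin (d + 1) ≤ lamFin d :=
  csSup_le_csSup (bddAbove_dissipFin hd) ⟨-1, neg_one_mem_dissipFin _⟩
    (dissipFin_succ_subset d)

lemma tendsto_neg_one_add_one_div :
    Tendsto (fun d : ℕ => -1 + 1 / (d : ℝ)) atTop (𝓝 (-1)) := by
  simpa using tendsto_const_nhds.add (tendsto_one_div_atTop_nhds_zero_nat (𝕜 := ℝ))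

lemma tendsto_lamFin : Tendsto lamFin atTop (𝓝 (-1)) :=
  tendsto_of_tendsto_of_tendsto_of_le_of_le' tendsto_const_nhds tendsto_neg_one_add_one_div
    (eventually_gt_atTop 0 |>.mono fun _ => neg_one_le_lamFin)
    (eventually_gt_atTop 0 |>.mono fun _ => lamFin_le)

lemma memℓp_zeroExtend {d : ℕ} (x : Fin d → ℂ) : Memℓp (zeroExtend x) 2 :=
  memℓp_gen <| summable_of_ne_finset_zero (s := Finset.range d) fun k hk => by
    simp [zeroExtend_of_le x (not_lt.1 (Finset.mem_range.not.1 hk))]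

lemma reInnerAInf_zeroExtend {d : ℕ} (l : ℝ) (x : Fin d → ℂ) :
    reInnerAInf l ⟨zeroExtend x, memℓp_zeroExtend x⟩ = reInnerAFin d l x := by
  rw [reInnerAFin_eq_re_sum le_rfl, ← tsum_eq_sum (L := .unconditional ℕ) (s := Finset.range d)
    fun k hk => bidiagTerm_of_eq_zero (zeroExtend_of_le x (not_lt.1 (Finset.mem_range.not.1 hk)))]
  rfl

def dissipInf : Set ℝ := {l | ∀ x : lp (fun _ : ℕ => ℂ) 2, reInnerAInf l x ≤ 0}

lemma dissipInf_subset_dissipFin (d : ℕ) : dissipInf ⊆ dissipFin d := fun _ hl x => by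
  simpa [reInnerAInf_zeroExtend] using hl ⟨zeroExtend x, memℓp_zeroExtend x⟩

lemma summable_norm_sq (x : lp (fun _ : ℕ => ℂ) 2) : Summable fun k => ‖x k‖ ^ 2 := by
  simpa using (lp.memℓp x).summable (by norm_num : (0 : ℝ) < (2 : ENNReal).toReal)

/-- The partial sums are bounded by `‖x n‖² / 2`, which tends to zero as `x ∈ ℓ²`. -/
lemma neg_one_mem_dissipInf : (-1 : ℝ) ∈ dissipInf := fun x => by
  have hx := summable_norm_sq x
  have hpartial := (Complex.continuous_re.tendsto _).comp
    (summable_bidiagTerm (-1) hx).hasSum.tendsto_sum_nat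
  have hbound : Tendsto (fun n => ‖x n‖ ^ 2 / 2) atTop (𝓝 0) := by
    simpa using hx.tendsto_atTop_zero.div_const 2
  refine le_of_tendsto_of_tendsto' hpartial hbound fun n => ?_
  dsimp only [Function.comp_apply]
  linarith [re_sum_bidiagTerm_neg_one_le x n, sq_nonneg ‖x 0‖]

lemma le_neg_one_of_mem_dissipInf {l : ℝ} (hl : l ∈ dissipInf) : l ≤ -1 :=
  ge_of_tendsto tendsto_neg_one_add_one_div <| eventually_gt_atTop 0 |>.mono fun _ hd =>
    le_of_mem_dissipFin hd (dissipInf_subset_dissipFin _ hl)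

lemma lamInf_eq : lamInf = -1 :=
  IsGreatest.csSup_eq ⟨neg_one_mem_dissipInf, fun _ => le_neg_one_of_mem_dissipInf⟩

/-- **Properties of the dissipativity thresholds `λ_d`.**
The numbers `λ_d` (for `d ∈ ℕ ∪ {∞}`) lie in `[−1, 0]`, `λ₁ = 0`, `λ_∞ = −1`,
`λ_d → λ_∞ = −1` as `d → ∞`, and `λ_{d+1} ≤ λ_d` for all `d ∈ ℕ`. -/
theorem lam_d_properties :
    (∀ d : ℕ, 1 ≤ d → lamFin d ∈ Set.Icc (-1 : ℝ) 0) ∧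
    lamInf ∈ Set.Icc (-1 : ℝ) 0 ∧
    lamFin 1 = 0 ∧
    lamInf = -1 ∧
    Tendsto (fun d : ℕ => lamFin d) atTop (nhds (-1)) ∧
    (∀ d : ℕ, 1 ≤ d → lamFin (d + 1) ≤ lamFin d) := by
  refine ⟨fun d hd => ⟨neg_one_le_lamFin hd, (lamFin_le hd).trans ?_⟩, by norm_num [lamInf_eq],
    lamFin_one, lamInf_eq, tendsto_lamFin, fun d hd => lamFin_succ_le hd⟩
  have : 1 / (d : ℝ) ≤ 1 := div_le_one_of_le₀ (by exact_mod_cast hd) (Nat.cast_nonneg d)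
  linarith
end

section
/- Let A(t) : D ⊆ H → H be a family of operators on a Hilbert space H with t ↦ A(t)x continuous for all x ∈ D, and let U be an evolution family for A. Then U(t,s) is isometric for all 0 ≤ s ≤ t ≤ 1 if and only if A(t) is skew-symmetric for all t ∈ [0,1]. -/
open Set

/-! For two solutions `u`, `v` of `y' = A y`, the derivative of `⟪u, v⟫` is
`⟪A u, v⟫ + ⟪u, A v⟫`. If every `U t s` is isometric, this inner product is constant in `t`,
and differentiating at `t = s` gives skew-symmetry of `A s` for `s < 1`; conversely,
skew-symmetry makes `‖U t s x‖²` constant for `x ∈ D`, and density of `D` extends this to all of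
`H`. The endpoint `1`, where no solution is required to start, follows from the continuity
assumptions by letting the starting time tend to `1`. -/

theorem ContinuousOn.eqOn_Icc_of_eqOn_Ico {α X : Type*} [TopologicalSpace α] [LinearOrder α]
    [OrderTopology α] [DenselyOrdered α] [TopologicalSpace X] [T2Space X] {f g : α → X}
    {a b : α} (hab : a < b) (hf : ContinuousOn f (Icc a b)) (hg : ContinuousOn g (Icc a b))
    (h : EqOn f g (Ico a b)) : EqOn f g (Icc a b) :=
  h.of_subset_closure hf hg Ico_subset_Icc_self (closure_Ico hab.ne).ge

section InnerProductSpace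

variable {𝕜 E : Type*} [RCLike 𝕜] [NormedAddCommGroup E] [InnerProductSpace 𝕜 E]
  [NormedSpace ℝ E]

local notation "⟪" x ", " y "⟫" => inner 𝕜 x y

theorem inner_add_inner_eq_zero_of_isometric {V : ℝ → E →L[𝕜] E} {a b : ℝ} (hab : a < b)
    (hV : ∀ τ ∈ Icc a b, ∀ z, ‖V τ z‖ = ‖z‖) {x y x' y' : E}
    (hx : HasDerivWithinAt (fun τ => V τ x) x' (Icc a b) a)
    (hy : HasDerivWithinAt (fun τ => V τ y) y' (Icc a b) a) :
    ⟪x', V a y⟫ + ⟪V a x, y'⟫ = 0 := by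
  have ha : a ∈ Icc a b := left_mem_Icc.2 hab.le
  have hconst : ∀ τ ∈ Icc a b, ⟪V τ x, V τ y⟫ = ⟪x, y⟫ := fun τ hτ =>
    LinearIsometry.inner_map_map ⟨(V τ).toLinearMap, hV τ hτ⟩ x y
  have hzero : HasDerivWithinAt (fun τ => ⟪V τ x, V τ y⟫) 0 (Icc a b) a :=
    (hasDerivWithinAt_const a _ ⟪x, y⟫).congr hconst (hconst a ha)
  rw [add_comm, (uniqueDiffOn_Icc hab a ha).eq_deriv _ (hx.inner 𝕜 hy) hzero]

theorem norm_eq_of_inner_add_inner_eq_zero {u u' : ℝ → E} {a b : ℝ}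
    (hu : ∀ τ ∈ Icc a b, HasDerivWithinAt u (u' τ) (Icc a b) τ)
    (hskew : ∀ τ ∈ Icc a b, ⟪u' τ, u τ⟫ + ⟪u τ, u' τ⟫ = 0) :
    ∀ τ ∈ Icc a b, ‖u τ‖ = ‖u a‖ := by
  have hzero : ∀ τ ∈ Icc a b, HasDerivWithinAt (fun τ => ⟪u τ, u τ⟫) 0 (Icc a b) τ :=
    fun τ hτ => by
      have := (hu τ hτ).inner 𝕜 (hu τ hτ)
      rwa [add_comm, hskew τ hτ] at this
  have hconst := constant_of_derivWithin_zero (fun τ hτ => (hzero τ hτ).differentiableWithinAt)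
    fun τ hτ => (hzero τ (Ico_subset_Icc_self hτ)).derivWithin
      (uniqueDiffOn_Icc (hτ.1.trans_lt hτ.2) τ (Ico_subset_Icc_self hτ))
  intro τ hτ
  rw [norm_eq_sqrt_re_inner (𝕜 := 𝕜), norm_eq_sqrt_re_inner (𝕜 := 𝕜), hconst τ hτ]

end InnerProductSpace

theorem evolution_family_isometric_iff_skew_symmetric_general
    {H : Type*} [NormedAddCommGroup H] [InnerProductSpace ℂ H]
    (D : Submodule ℂ H) (hdense : Dense (D : Set H))
    (A : ℝ → H →ₗ[ℂ] H)
    (hAc : ∀ x ∈ D, ContinuousOn (fun t => A t x) (Set.Icc 0 1))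
    (U : ℝ → ℝ → H →L[ℂ] H)
    (hUcont : ∀ x : H, ContinuousOn (fun p : ℝ × ℝ => U p.2 p.1 x)
      {p : ℝ × ℝ | 0 ≤ p.1 ∧ p.1 ≤ p.2 ∧ p.2 ≤ 1})
    (hUODE : ∀ s ∈ Set.Ico (0:ℝ) 1, ∀ x ∈ D, U s s x = x ∧
      ∀ t ∈ Set.Icc s 1, U t s x ∈ D ∧
        HasDerivWithinAt (fun τ => U τ s x) (A t (U t s x)) (Set.Icc s 1) t) :
    (∀ s t : ℝ, 0 ≤ s → s ≤ t → t ≤ 1 → ∀ x : H, ‖U t s x‖ = ‖x‖) ↔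
    (∀ t ∈ Set.Icc (0:ℝ) 1, ∀ x ∈ D, ∀ y ∈ D,
      (inner ℂ (A t x) y : ℂ) + (inner ℂ x (A t y) : ℂ) = 0) := by
  constructor
  · intro hiso t ht x hx y hy
    refine ContinuousOn.eqOn_Icc_of_eqOn_Ico zero_lt_one
      (((hAc x hx).inner continuousOn_const).add (continuousOn_const.inner (hAc y hy)))
      continuousOn_const (fun s hs => ?_) ht
    have hmem : s ∈ Icc s 1 := left_mem_Icc.2 hs.2.le
    obtain ⟨hx0, hdx⟩ := hUODE s hs x hx
    obtain ⟨hy0, hdy⟩ := hUODE s hs y hy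
    simpa only [Pi.add_apply, hx0, hy0] using inner_add_inner_eq_zero_of_isometric hs.2
      (fun τ hτ => hiso s τ hs.1 hτ.1 hτ.2) (hdx s hmem).2 (hdy s hmem).2
  · intro hskew
    have hiso : ∀ s ∈ Ico (0:ℝ) 1, ∀ t ∈ Icc s 1, ∀ x, ‖U t s x‖ = ‖x‖ := by
      intro s hs t ht
      refine congrFun (Continuous.ext_on hdense (U t s).continuous.norm continuous_norm
        fun x hx => ?_)
      obtain ⟨hx0, hdx⟩ := hUODE s hs x hx
      simpa only [hx0] using norm_eq_of_inner_add_inner_eq_zero (fun τ hτ => (hdx τ hτ).2)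
        (fun τ hτ => hskew τ ⟨hs.1.trans hτ.1, hτ.2⟩ _ (hdx τ hτ).1 _ (hdx τ hτ).1) t ht
    intro s t hs hst ht x
    obtain hs1 | rfl := (hst.trans ht).lt_or_eq
    · exact hiso s ⟨hs, hs1⟩ t ⟨hst, ht⟩ x
    obtain rfl := le_antisymm ht hst
    have hcont : ContinuousOn (fun s => ‖U 1 s x‖) (Icc 0 1) :=
      ((hUcont x).comp (continuous_id.prodMk continuous_const).continuousOn
        fun s hs => ⟨hs.1, hs.2, le_rfl⟩).norm
    exact ContinuousOn.eqOn_Icc_of_eqOn_Ico zero_lt_one hcont continuousOn_const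
      (fun s hs => hiso s hs 1 ⟨hs.2.le, le_rfl⟩ x) ⟨zero_le_one, le_rfl⟩

/-- **Isometric evolution families and skew-symmetric generators.**
Let `A t : D ⊆ H → H` be a family of operators on a complex Hilbert space `H` with
`t ↦ A t x` continuous for all `x ∈ D`, and let `U` be an evolution family for `A`
(cocycle property, joint strong continuity, and `t ↦ U t s x` solves `y' = A t y`,
`y s = x`, staying in `D`, for `x ∈ D`).  Then `U t s` is isometric for all
`0 ≤ s ≤ t ≤ 1` if and only if `A t` is skew-symmetric for all `t ∈ [0,1]`. -/
theorem evolution_family_isometric_iff_skew_symmetric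
    {H : Type*} [NormedAddCommGroup H] [InnerProductSpace ℂ H] [CompleteSpace H]
    (D : Submodule ℂ H) (hdense : Dense (D : Set H))
    (A : ℝ → H →ₗ[ℂ] H)
    (hAc : ∀ x ∈ D, ContinuousOn (fun t => A t x) (Set.Icc 0 1))
    (U : ℝ → ℝ → H →L[ℂ] H)
    (hUcocycle : ∀ r s t : ℝ, 0 ≤ r → r ≤ s → s ≤ t → t ≤ 1 → U t s ∘L U s r = U t r)
    (hUcont : ∀ x : H, ContinuousOn (fun p : ℝ × ℝ => U p.2 p.1 x)
      {p : ℝ × ℝ | 0 ≤ p.1 ∧ p.1 ≤ p.2 ∧ p.2 ≤ 1})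
    (hUODE : ∀ s ∈ Set.Ico (0:ℝ) 1, ∀ x ∈ D, U s s x = x ∧
      ∀ t ∈ Set.Icc s 1, U t s x ∈ D ∧
        HasDerivWithinAt (fun τ => U τ s x) (A t (U t s x)) (Set.Icc s 1) t) :
    (∀ s t : ℝ, 0 ≤ s → s ≤ t → t ≤ 1 → ∀ x : H, ‖U t s x‖ = ‖x‖) ↔
    (∀ t ∈ Set.Icc (0:ℝ) 1, ∀ x ∈ D, ∀ y ∈ D,
      (inner ℂ (A t x) y : ℂ) + (inner ℂ x (A t y) : ℂ) = 0) :=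
  evolution_family_isometric_iff_skew_symmetric_general D hdense A hAc U hUcont hUODE
end

section
/- Let A(t) : D ⊆ X → X for t ∈ [0,1] with t ↦ A(t)x continuous for all x ∈ D, and let P(t) be bounded projections with P(t)A(t) ⊆ A(t)P(t) and t ↦ P(t)x continuously differentiable for all x ∈ X. Suppose for each T > 0 there exists an evolution family U_{a,T} for T·A + [P',P]. Then the intertwining relation P(t) U_{a,T}(t,s) = U_{a,T}(t,s) P(s) holds for all 0 ≤ s ≤ t ≤ 1 and all T > 0. -/
/-!
Write `G τ = T • A τ + [P' τ, P τ]`. Differentiating `P² = P` gives `P' = P'P + PP'`, hence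
`PP'P = 0`; together with `PA ⊆ AP` this yields `P' u + P (G u) = G (P u)`. So both
`τ ↦ P τ (U τ s x)` and `τ ↦ U τ s (P s x)` solve `y' = G y`, and their difference `Y` is, at
every `τ`, tangent to the solution `σ ↦ U σ τ (Y τ)`. By the cocycle property
`τ ↦ U t τ (Y τ)` then has vanishing right derivative, so `Y t = U t s (Y s) = 0`.
The product rules for the merely strongly continuous families `P` and `U t ·` rest on the uniform
bounds given by Banach–Steinhaus.
-/

open Set Filter Topology Asymptotics

theorem IsCompact.exists_bound_of_continuousOn_apply {α 𝕜 E F : Type*} [TopologicalSpace α]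
    [NontriviallyNormedField 𝕜] [NormedAddCommGroup E] [NormedSpace 𝕜 E] [CompleteSpace E]
    [NormedAddCommGroup F] [NormedSpace 𝕜 F] {K : Set α} (hK : IsCompact K)
    {B : α → E →L[𝕜] F} (hB : ∀ z, ContinuousOn (fun σ => B σ z) K) :
    ∃ M, ∀ σ ∈ K, ‖B σ‖ ≤ M := by
  obtain ⟨M, hM⟩ := banach_steinhaus (g := fun σ : K => B σ) fun z =>
    (hK.exists_bound_of_continuousOn (hB z)).imp fun _ h σ => h σ σ.2
  exact ⟨M, fun σ hσ => hM ⟨σ, hσ⟩⟩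

theorem ContinuousOn.clm_apply_of_bounded {α 𝕜 E F : Type*} [TopologicalSpace α]
    [NontriviallyNormedField 𝕜] [NormedAddCommGroup E] [NormedSpace 𝕜 E]
    [NormedAddCommGroup F] [NormedSpace 𝕜 F] {s : Set α} {B : α → E →L[𝕜] F} {v : α → E}
    {M : ℝ} (hM : ∀ σ ∈ s, ‖B σ‖ ≤ M) (hB : ∀ z, ContinuousOn (fun σ => B σ z) s)
    (hv : ContinuousOn v s) :
    ContinuousOn (fun σ => B σ (v σ)) s := by
  intro τ hτ
  have hsmall : Tendsto (fun σ => B σ (v σ - v τ)) (𝓝[s] τ) (𝓝 0) := by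
    refine squeeze_zero_norm' ?_ (by simpa using ((hv τ hτ).sub_const (v τ)).norm.const_mul M)
    filter_upwards [self_mem_nhdsWithin] with σ hσ
    exact (B σ).le_of_opNorm_le (hM σ hσ) _
  simpa [ContinuousWithinAt] using hsmall.add (hB (v τ) τ hτ)

theorem map_sub_of_hasDerivWithinAt_apply {𝕜 E F : Type*} [NontriviallyNormedField 𝕜]
    [NormedAddCommGroup E] [NormedSpace 𝕜 E] [NormedAddCommGroup F] [NormedSpace 𝕜 F]
    [NormedSpace ℝ F] {B : ℝ → E →L[𝕜] F} {B' : E → F} {s : Set ℝ} {τ : ℝ}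
    (hs : UniqueDiffWithinAt ℝ s τ) (hB : ∀ z, HasDerivWithinAt (fun σ => B σ z) (B' z) s τ)
    (y z : E) : B' (y - z) = B' y - B' z :=
  hs.eq_deriv _ (hB (y - z)) (by simpa [Pi.sub_def] using (hB y).sub (hB z))

def compCommutator {M : Type*} [AddCommGroup M] (f g : M → M) (y : M) : M := f (g y) - g (f y)

theorem compCommutator_sub {M : Type*} [AddCommGroup M] {f g : M → M}
    (hf : ∀ x y, f (x - y) = f x - f y) (hg : ∀ x y, g (x - y) = g x - g y) (x y : M) :
    compCommutator f g (x - y) = compCommutator f g x - compCommutator f g y := by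
  simp only [compCommutator, hf, hg]
  abel

section Algebra

variable {R M : Type*} [Semiring R] [AddCommGroup M] [TopologicalSpace M] [Module R M]
  {p : M →L[R] M} {p' : M → M}

theorem IsIdempotentElem.apply_comp_apply_eq_zero_of_leibniz (hp : IsIdempotentElem p)
    (hleib : ∀ z, p' z = p' (p z) + p (p' z)) (z : M) : p (p' (p z)) = 0 := by
  have hpp : p (p z) = p z := congr($hp z)
  have := hleib (p z)
  rwa [hpp, left_eq_add] at this

theorem IsIdempotentElem.deriv_add_apply_generator_of_leibniz {a : M → M} {u : M}
    (hp : IsIdempotentElem p)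
    (hleib : ∀ z, p' z = p' (p z) + p (p' z)) (hcomm : a (p u) = p (a u)) :
    p' u + p (a u + compCommutator p' p u) = a (p u) + compCommutator p' p (p u) := by
  have hpp : ∀ z, p (p z) = p z := fun z => congr($hp z)
  have hsandwich := hp.apply_comp_apply_eq_zero_of_leibniz hleib u
  unfold compCommutator
  rw [hleib u]
  simp only [map_add, map_sub, map_zero, hpp, hsandwich, hcomm]
  abel

end Algebra

section RealParameter

variable {𝕜 E F : Type*} [NontriviallyNormedField 𝕜] [NormedAlgebra ℝ 𝕜]
  [NormedAddCommGroup E] [NormedSpace 𝕜 E] [NormedSpace ℝ E] [IsScalarTower ℝ 𝕜 E]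
  [NormedAddCommGroup F] [NormedSpace 𝕜 F] [NormedSpace ℝ F] [IsScalarTower ℝ 𝕜 F]

theorem HasDerivWithinAt.clm_apply_of_bounded {B : ℝ → E →L[𝕜] F} {B' : E → F} {v : ℝ → E}
    {v' : E} {s : Set ℝ} {τ M : ℝ} (hM : ∀ σ ∈ s, ‖B σ‖ ≤ M)
    (hB : ∀ z, HasDerivWithinAt (fun σ => B σ z) (B' z) s τ) (hv : HasDerivWithinAt v v' s τ) :
    HasDerivWithinAt (fun σ => B σ (v σ)) (B' (v τ) + B τ v') s τ := by
  rw [hasDerivWithinAt_iff_isLittleO]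
  have hsplit : (fun σ => B σ (v σ) - B τ (v τ) - (σ - τ) • (B' (v τ) + B τ v')) =
      fun σ => B σ (v σ - v τ - (σ - τ) • v') +
        ((B σ (v τ) - B τ (v τ) - (σ - τ) • B' (v τ)) + (σ - τ) • (B σ v' - B τ v')) := by
    funext σ
    simp only [map_sub, ContinuousLinearMap.map_smul_of_tower, smul_add, smul_sub]
    abel
  rw [hsplit]
  have hv_rem : (fun σ => B σ (v σ - v τ - (σ - τ) • v')) =o[𝓝[s] τ] fun σ => σ - τ := by
    refine IsBigO.trans_isLittleO (isBigO_iff.mpr ⟨M, ?_⟩) (hasDerivWithinAt_iff_isLittleO.mp hv)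
    filter_upwards [self_mem_nhdsWithin] with σ hσ
    exact (B σ).le_of_opNorm_le (hM σ hσ) _
  have hB_rem := hasDerivWithinAt_iff_isLittleO.mp (hB (v τ))
  have hB_cont : (fun σ => B σ v' - B τ v') =o[𝓝[s] τ] fun _ => (1 : ℝ) := by
    simpa [isLittleO_one_iff, ContinuousWithinAt] using
      (hB v').continuousWithinAt.sub_const (B τ v')
  have hB_var : (fun σ => (σ - τ) • (B σ v' - B τ v')) =o[𝓝[s] τ] fun σ => σ - τ := by
    simpa using (isBigO_refl (fun σ => σ - τ) _).smul_isLittleO hB_cont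
  exact hv_rem.add (hB_rem.add hB_var)

theorem eq_deriv_comp_add_comp_deriv_of_isIdempotentElem {P : ℝ → E →L[𝕜] E} {P' : E → E}
    {s : Set ℝ} {τ M : ℝ} (hs : UniqueDiffWithinAt ℝ s τ) (hτ : τ ∈ s)
    (hM : ∀ σ ∈ s, ‖P σ‖ ≤ M) (hidem : ∀ σ ∈ s, IsIdempotentElem (P σ))
    (hP : ∀ z, HasDerivWithinAt (fun σ => P σ z) (P' z) s τ) (z : E) :
    P' z = P' (P τ z) + P τ (P' z) := by
  have hPP := HasDerivWithinAt.clm_apply_of_bounded hM hP (hP z)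
  refine hs.eq_deriv _ (hP z) (hPP.congr (fun σ hσ => ?_) ?_)
  · exact (congr($(hidem σ hσ) z)).symm
  · exact (congr($(hidem τ hτ) z)).symm

theorem hasDerivWithinAt_proj_apply_sub_of_generator {P : ℝ → E →L[𝕜] E} {P' : E → E}
    {a : E → E} {v w : ℝ → E} {s : Set ℝ} {τ M : ℝ} (hs : UniqueDiffWithinAt ℝ s τ) (hτ : τ ∈ s)
    (hM : ∀ σ ∈ s, ‖P σ‖ ≤ M) (hidem : ∀ σ ∈ s, IsIdempotentElem (P σ))
    (hP : ∀ z, HasDerivWithinAt (fun σ => P σ z) (P' z) s τ) (ha : ∀ y z, a (y - z) = a y - a z)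
    (hcomm : a (P τ (v τ)) = P τ (a (v τ)))
    (hv : HasDerivWithinAt v (a (v τ) + compCommutator P' (P τ) (v τ)) s τ)
    (hw : HasDerivWithinAt w (a (w τ) + compCommutator P' (P τ) (w τ)) s τ) :
    HasDerivWithinAt (fun σ => P σ (v σ) - w σ)
      (a (P τ (v τ) - w τ) + compCommutator P' (P τ) (P τ (v τ) - w τ)) s τ := by
  have hleib := eq_deriv_comp_add_comp_deriv_of_isIdempotentElem hs hτ hM hidem hP
  refine ((hv.clm_apply_of_bounded hM hP).sub hw).congr_deriv ?_
  rw [ha, compCommutator_sub (map_sub_of_hasDerivWithinAt_apply hs hP) (map_sub (P τ)),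
    (hidem τ hτ).deriv_add_apply_generator_of_leibniz hleib hcomm]
  abel

end RealParameter

theorem eq_evolution_apply_of_tangent {𝕜 E : Type*} [NontriviallyNormedField 𝕜]
    [NormedAddCommGroup E] [NormedSpace 𝕜 E] [NormedSpace ℝ E] [CompleteSpace E]
    {U : ℝ → ℝ → E →L[𝕜] E} {Y : ℝ → E} {s t : ℝ} (hst : s ≤ t)
    (hcocycle : ∀ τ σ, s ≤ τ → τ ≤ σ → σ ≤ t → U t σ ∘L U σ τ = U t τ)
    (hdiag : ∀ τ ∈ Icc s t, U τ τ = 1)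
    (hcont : ∀ z, ContinuousOn (fun σ => U t σ z) (Icc s t)) (hY : ContinuousOn Y (Icc s t))
    (htangent : ∀ τ ∈ Ico s t, ∃ y', HasDerivWithinAt Y y' (Icc τ t) τ ∧
      HasDerivWithinAt (fun σ => U σ τ (Y τ)) y' (Icc τ t) τ) :
    Y t = U t s (Y s) := by
  obtain ⟨M, hM⟩ := isCompact_Icc.exists_bound_of_continuousOn_apply hcont
  have hderiv : ∀ τ ∈ Ico s t, HasDerivWithinAt (fun σ => U t σ (Y σ)) 0 (Ici τ) τ := by
    rintro τ ⟨hsτ, hτt⟩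
    obtain ⟨y', hY', hU'⟩ := htangent τ ⟨hsτ, hτt⟩
    have hgap : (fun σ => Y σ - U σ τ (Y τ)) =o[𝓝[Icc τ t] τ] fun σ => σ - τ := by
      simpa [hdiag τ ⟨hsτ, hτt.le⟩] using hasDerivWithinAt_iff_isLittleO.mp (hY'.sub hU')
    have hpull : (fun σ => U t σ (Y σ) - U t τ (Y τ)) =O[𝓝[Icc τ t] τ]
        fun σ => Y σ - U σ τ (Y τ) := by
      refine isBigO_iff.mpr ⟨M, ?_⟩
      filter_upwards [self_mem_nhdsWithin] with σ hσ
      rw [← hcocycle τ σ hsτ hσ.1 hσ.2, ContinuousLinearMap.comp_apply, ← map_sub]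
      exact (U t σ).le_of_opNorm_le (hM σ ⟨hsτ.trans hσ.1, hσ.2⟩) _
    have hflat : HasDerivWithinAt (fun σ => U t σ (Y σ)) 0 (Icc τ t) τ := by
      rw [hasDerivWithinAt_iff_isLittleO]
      simpa using hpull.trans_isLittleO hgap
    exact hflat.mono_of_mem_nhdsWithin (Icc_mem_nhdsGE_of_mem ⟨le_rfl, hτt⟩)
  have hconst := constant_of_has_deriv_right_zero (hY.clm_apply_of_bounded hM hcont) hderiv t
    (right_mem_Icc.2 hst)
  rwa [hdiag t (right_mem_Icc.2 hst)] at hconst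

section EvolutionFamily

variable {𝕜 E : Type*} [NontriviallyNormedField 𝕜] [NormedAddCommGroup E] [NormedSpace 𝕜 E]
  [NormedSpace ℝ E]

structure IsEvolutionFamily (U : ℝ → ℝ → E →L[𝕜] E) (D : Set E) (G : ℝ → E → E) : Prop where
  cocycle : ∀ r s t : ℝ, 0 ≤ r → r ≤ s → s ≤ t → t ≤ 1 → U t s ∘L U s r = U t r
  continuousOn : ∀ x, ContinuousOn (fun p : ℝ × ℝ => U p.2 p.1 x)
    {p : ℝ × ℝ | 0 ≤ p.1 ∧ p.1 ≤ p.2 ∧ p.2 ≤ 1}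
  solves : ∀ s ∈ Ico (0:ℝ) 1, ∀ x ∈ D, U s s x = x ∧ ∀ t ∈ Icc s 1, U t s x ∈ D ∧
    HasDerivWithinAt (fun τ => U τ s x) (G t (U t s x)) (Icc s 1) t

namespace IsEvolutionFamily

variable {U : ℝ → ℝ → E →L[𝕜] E} {D : Set E} {G : ℝ → E → E}

theorem continuousOn_apply_comp (hU : IsEvolutionFamily U D G) (x : E) {f g : ℝ → ℝ}
    {K : Set ℝ} (hf : Continuous f) (hg : Continuous g)
    (hK : ∀ σ ∈ K, 0 ≤ f σ ∧ f σ ≤ g σ ∧ g σ ≤ 1) :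
    ContinuousOn (fun σ => U (g σ) (f σ) x) K :=
  (hU.continuousOn x).comp (hf.prodMk hg).continuousOn hK

theorem diag_eq_one (hU : IsEvolutionFamily U D G) (hD : Dense D) :
    ∀ τ ∈ Icc (0:ℝ) 1, U τ τ = 1 := by
  intro τ hτ
  have hdiagD : ∀ z ∈ D, U τ τ z = z := fun z hz =>
    EqOn.of_subset_closure (fun σ hσ => (hU.solves σ hσ z hz).1)
      (hU.continuousOn_apply_comp z continuous_id continuous_id fun σ hσ => ⟨hσ.1, le_rfl, hσ.2⟩)
      continuousOn_const Ico_subset_Icc_self (closure_Ico zero_ne_one).superset hτ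
  ext z
  exact congrFun (Continuous.ext_on hD (U τ τ).continuous continuous_id hdiagD) z

end IsEvolutionFamily

def intertwiningDefect (P : ℝ → E →L[𝕜] E) (U : ℝ → ℝ → E →L[𝕜] E) (s : ℝ) (x : E) (τ : ℝ) :
    E :=
  P τ (U τ s x) - U τ s (P s x)

theorem IsEvolutionFamily.continuousOn_intertwiningDefect {U : ℝ → ℝ → E →L[𝕜] E} {D : Set E}
    {G : ℝ → E → E} {P : ℝ → E →L[𝕜] E} {M s t : ℝ} (hU : IsEvolutionFamily U D G)
    (hM : ∀ σ ∈ Icc (0:ℝ) 1, ‖P σ‖ ≤ M) (hP : ∀ z, ContinuousOn (fun σ => P σ z) (Icc 0 1))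
    (hs : 0 ≤ s) (ht : t ≤ 1) (x : E) :
    ContinuousOn (intertwiningDefect P U s x) (Icc s t) := by
  have hsub : Icc s t ⊆ Icc 0 1 := Icc_subset_Icc hs ht
  have hslice : ∀ z, ContinuousOn (fun σ => U σ s z) (Icc s t) := fun z =>
    hU.continuousOn_apply_comp z continuous_const continuous_id fun σ hσ =>
      ⟨hs, hσ.1, hσ.2.trans ht⟩
  exact ((hslice x).clm_apply_of_bounded (fun σ hσ => hM σ (hsub hσ))
    fun z => (hP z).mono hsub).sub (hslice (P s x))

variable [NormedAlgebra ℝ 𝕜] [IsScalarTower ℝ 𝕜 E]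

theorem IsEvolutionFamily.intertwiningDefect_tangent {D : Submodule 𝕜 E} {A : ℝ → E →ₗ[𝕜] E}
    {P : ℝ → E →L[𝕜] E} {P' : ℝ → E → E} {U : ℝ → ℝ → E →L[𝕜] E} {T M s τ : ℝ} {x : E}
    (hU : IsEvolutionFamily U D fun σ y => T • A σ y + compCommutator (P' σ) (P σ) y)
    (hM : ∀ σ ∈ Icc (0:ℝ) 1, ‖P σ‖ ≤ M) (hidem : ∀ σ ∈ Icc (0:ℝ) 1, IsIdempotentElem (P σ))
    (hcomm : ∀ σ ∈ Icc (0:ℝ) 1, ∀ y ∈ D, P σ y ∈ D ∧ A σ (P σ y) = P σ (A σ y))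
    (hP' : ∀ z, ∀ σ ∈ Icc (0:ℝ) 1, HasDerivWithinAt (fun ρ => P ρ z) (P' σ z) (Icc 0 1) σ)
    (hs : 0 ≤ s) (hx : x ∈ D) (hτ : τ ∈ Ico s 1) :
    ∃ y', HasDerivWithinAt (intertwiningDefect P U s x) y' (Icc τ 1) τ ∧
      HasDerivWithinAt (fun σ => U σ τ (intertwiningDefect P U s x τ)) y' (Icc τ 1) τ := by
  have hτ01 : τ ∈ Icc (0:ℝ) 1 := ⟨hs.trans hτ.1, hτ.2.le⟩
  have hτs : Icc τ 1 ⊆ Icc s 1 := Icc_subset_Icc_left hτ.1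
  have hτ0 : Icc τ 1 ⊆ Icc 0 1 := Icc_subset_Icc_left hτ01.1
  have hτ' : τ ∈ Icc τ 1 := left_mem_Icc.2 hτ.2.le
  obtain ⟨-, hUs⟩ := hU.solves s ⟨hs, hτ.1.trans_lt hτ.2⟩ x hx
  obtain ⟨hvD, hv⟩ := hUs τ (hτs hτ')
  obtain ⟨hwD, hw⟩ := (hU.solves s ⟨hs, hτ.1.trans_lt hτ.2⟩ _
    (hcomm s ⟨hs, hτ.1.trans hτ.2.le⟩ x hx).1).2 τ (hτs hτ')
  have hPA := hcomm τ hτ01 _ hvD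
  have hYD : intertwiningDefect P U s x τ ∈ D := D.sub_mem hPA.1 hwD
  obtain ⟨hdiag, hUτ⟩ := hU.solves τ ⟨hτ01.1, hτ.2⟩ _ hYD
  refine ⟨_, ?_, by simpa only [hdiag] using (hUτ τ hτ').2⟩
  refine hasDerivWithinAt_proj_apply_sub_of_generator (a := fun y => T • A τ y)
    (uniqueDiffOn_Icc hτ.2 τ hτ') hτ' (fun σ hσ => hM σ (hτ0 hσ)) (fun σ hσ => hidem σ (hτ0 hσ))
    (fun z => (hP' z τ hτ01).mono hτ0) (fun y z => by simp only [map_sub, smul_sub]) ?_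
    (hv.mono hτs) (hw.mono hτs)
  simp only [hPA.2, ContinuousLinearMap.map_smul_of_tower]

end EvolutionFamily

theorem adiabatic_evolution_intertwining_general
    {X : Type*} [NormedAddCommGroup X] [NormedSpace ℂ X] [CompleteSpace X]
    (D : Submodule ℂ X) (hdense : Dense (D : Set X))
    (A : ℝ → X →ₗ[ℂ] X)
    (P : ℝ → X →L[ℂ] X)
    (hproj : ∀ t ∈ Set.Icc (0:ℝ) 1, P t ∘L P t = P t)
    (hcomm : ∀ t ∈ Set.Icc (0:ℝ) 1, ∀ x ∈ D, P t x ∈ D ∧ A t (P t x) = P t (A t x))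
    (P' : ℝ → X → X)
    (hP' : ∀ x : X, ∀ t ∈ Set.Icc (0:ℝ) 1,
      HasDerivWithinAt (fun s => P s x) (P' t x) (Set.Icc 0 1) t)
    (U : ℝ → ℝ → ℝ → X →L[ℂ] X)
    (hUcocycle : ∀ T > (0:ℝ), ∀ r s t : ℝ, 0 ≤ r → r ≤ s → s ≤ t → t ≤ 1 →
      U T t s ∘L U T s r = U T t r)
    (hUcont : ∀ T > (0:ℝ), ∀ x : X, ContinuousOn (fun p : ℝ × ℝ => U T p.2 p.1 x)
      {p : ℝ × ℝ | 0 ≤ p.1 ∧ p.1 ≤ p.2 ∧ p.2 ≤ 1})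
    (hUODE : ∀ T > (0:ℝ), ∀ s ∈ Set.Ico (0:ℝ) 1, ∀ x ∈ D, U T s s x = x ∧
      ∀ t ∈ Set.Icc s 1, U T t s x ∈ D ∧
        HasDerivWithinAt (fun τ => U T τ s x)
          (T • A t (U T t s x) + (P' t (P t (U T t s x)) - P t (P' t (U T t s x))))
          (Set.Icc s 1) t) :
    ∀ T > (0:ℝ), ∀ s t : ℝ, 0 ≤ s → s ≤ t → t ≤ 1 → ∀ x : X,
      P t (U T t s x) = U T t s (P s x) := by
  intro T hT s t hs hst ht
  have hU : IsEvolutionFamily (U T) D fun τ y => T • A τ y + compCommutator (P' τ) (P τ) y :=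
    ⟨hUcocycle T hT, hUcont T hT, hUODE T hT⟩
  have hPcont : ∀ z, ContinuousOn (fun τ => P τ z) (Icc 0 1) := fun z τ hτ =>
    (hP' z τ hτ).continuousWithinAt
  obtain ⟨M, hM⟩ := isCompact_Icc.exists_bound_of_continuousOn_apply hPcont
  have hdiag := hU.diag_eq_one hdense
  suffices hD : ∀ x ∈ D, intertwiningDefect P (U T) s x t = 0 from fun x =>
    congrFun (Continuous.ext_on hdense ((P t).continuous.comp (U T t s).continuous)
      ((U T t s).continuous.comp (P s).continuous) fun z hz => sub_eq_zero.mp (hD z hz)) x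
  intro x hx
  have hY := eq_evolution_apply_of_tangent hst
    (fun τ σ h1 h2 h3 => hU.cocycle τ σ t (hs.trans h1) h2 h3 ht)
    (fun τ hτ => hdiag τ ⟨hs.trans hτ.1, hτ.2.trans ht⟩)
    (fun z => hU.continuousOn_apply_comp z continuous_id continuous_const fun σ hσ =>
      ⟨hs.trans hσ.1, hσ.2, ht⟩)
    (hU.continuousOn_intertwiningDefect hM hPcont hs ht x) fun τ hτ =>
      (hU.intertwiningDefect_tangent hM hproj hcomm hP' hs hx ⟨hτ.1, hτ.2.trans_le ht⟩).imp
        fun _ h => ⟨h.1.mono (Icc_subset_Icc_right ht), h.2.mono (Icc_subset_Icc_right ht)⟩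
  rw [hY, intertwiningDefect, hdiag s ⟨hs, hst.trans ht⟩]
  simp

/-- **The intertwining relation for the adiabatic evolution.**
Let `A t : D ⊆ X → X` with `t ↦ A t x` continuous for all `x ∈ D`, and let `P t` be
bounded projections with `P t A t ⊆ A t P t` and `t ↦ P t x` continuously differentiable
for all `x ∈ X` (derivative `P' t x`).  Suppose for each `T > 0` there is an evolution
family `U T` for `T·A + [P', P]`.  Then the intertwining relation
`P t ∘ U T t s = U T t s ∘ P s` holds for all `0 ≤ s ≤ t ≤ 1` and all `T > 0`. -/
theorem adiabatic_evolution_intertwining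
    {X : Type*} [NormedAddCommGroup X] [NormedSpace ℂ X] [CompleteSpace X]
    (D : Submodule ℂ X) (hdense : Dense (D : Set X))
    (A : ℝ → X →ₗ[ℂ] X)
    (hAc : ∀ x ∈ D, ContinuousOn (fun t => A t x) (Set.Icc 0 1))
    (P : ℝ → X →L[ℂ] X)
    (hproj : ∀ t ∈ Set.Icc (0:ℝ) 1, P t ∘L P t = P t)
    (hcomm : ∀ t ∈ Set.Icc (0:ℝ) 1, ∀ x ∈ D, P t x ∈ D ∧ A t (P t x) = P t (A t x))
    (P' : ℝ → X → X)
    (hP' : ∀ x : X, ∀ t ∈ Set.Icc (0:ℝ) 1,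
      HasDerivWithinAt (fun s => P s x) (P' t x) (Set.Icc 0 1) t)
    (hP'c : ∀ x : X, ContinuousOn (fun t => P' t x) (Set.Icc 0 1))
    (U : ℝ → ℝ → ℝ → X →L[ℂ] X)
    (hUcocycle : ∀ T > (0:ℝ), ∀ r s t : ℝ, 0 ≤ r → r ≤ s → s ≤ t → t ≤ 1 →
      U T t s ∘L U T s r = U T t r)
    (hUcont : ∀ T > (0:ℝ), ∀ x : X, ContinuousOn (fun p : ℝ × ℝ => U T p.2 p.1 x)
      {p : ℝ × ℝ | 0 ≤ p.1 ∧ p.1 ≤ p.2 ∧ p.2 ≤ 1})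
    (hUODE : ∀ T > (0:ℝ), ∀ s ∈ Set.Ico (0:ℝ) 1, ∀ x ∈ D, U T s s x = x ∧
      ∀ t ∈ Set.Icc s 1, U T t s x ∈ D ∧
        HasDerivWithinAt (fun τ => U T τ s x)
          (T • A t (U T t s x) + (P' t (P t (U T t s x)) - P t (P' t (U T t s x))))
          (Set.Icc s 1) t) :
    ∀ T > (0:ℝ), ∀ s t : ℝ, 0 ≤ s → s ≤ t → t ≤ 1 → ∀ x : X,
      P t (U T t s x) = U T t s (P s x) :=
  adiabatic_evolution_intertwining_general D hdense A P hproj hcomm P' hP' U hUcocycle hUcont hUODE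
end
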